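/- arXiv:2004.09975 — 4 statements merged into one kernel-verified Lean document; each statement's English description precedes it below -/
import Mathlib

section
/- For every n ≥ 5, the map sending a solution (x,y) of x² + 2y² = n with gcd(x,y)=1, x ∈ ℕ positive, y ∈ ℤ nonzero, to the unique z ∈ ZMod n with z·y ≡ x (mod n), is a surjection onto the set of z ∈ ZMod n satisfying z² + 2 ≡ 0 (mod n). -/
/-!
Descent on the form `x² + 2y²`. If `n ∣ c² + 2`, replace `c` by its balanced residue `c'`
(`|c'| ≤ n/2`), so that `c'² + 2 = m n` with `m < n`. By induction `m = s² + 2t²` with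
`s ≡ c' t (mod m)`, and dividing the composition
`(c'² + 2)(s² + 2t²) = (c' s + 2t)² + 2(s - c' t)²` by `m²` represents `n` compatibly with `c`.
Primitivity comes from an explicit Bézout relation between `x` and `y`, obtained by
dividing `(x - c y)(x + c y) = n - (c² + 2) y²` by `n`.
-/

theorem Int.exists_sq_add_two_mul_sq_of_mul_eq {m n c s t : ℤ} (hm : m ≠ 0)
    (hmn : m * n = c ^ 2 + 2) (hst : s ^ 2 + 2 * t ^ 2 = m) (hts : c * t ≡ s [ZMOD m]) :
    ∃ a b : ℤ, a ^ 2 + 2 * b ^ 2 = n ∧ c * b ≡ a [ZMOD n] := by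
  obtain ⟨b, hb⟩ := hts.dvd
  set a := c * b + t * n
  have ha : c * s + 2 * t = m * a := by linear_combination c * hb - t * hmn
  refine ⟨a, b, mul_left_cancel₀ (pow_ne_zero 2 hm) ?_, Int.modEq_iff_dvd.2 ⟨t, by ring⟩⟩
  calc m ^ 2 * (a ^ 2 + 2 * b ^ 2) = (m * a) ^ 2 + 2 * (m * b) ^ 2 := by ring
    _ = (c * s + 2 * t) ^ 2 + 2 * (s - c * t) ^ 2 := by rw [ha, hb]
    _ = (c ^ 2 + 2) * (s ^ 2 + 2 * t ^ 2) := by ring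
    _ = m ^ 2 * n := by rw [← hmn, hst]; ring

theorem Int.four_mul_sq_bmod_le (c : ℤ) {n : ℕ} (hn : 0 < n) : 4 * c.bmod n ^ 2 ≤ n ^ 2 := by
  have hlo := Int.le_bmod (x := c) hn
  have hhi := Int.bmod_lt (x := c) hn
  have h2 : |2 * c.bmod n| ≤ n := abs_le.2 ⟨by omega, by omega⟩
  nlinarith [sq_abs (2 * c.bmod n), abs_nonneg (2 * c.bmod n)]

theorem Int.exists_sq_add_two_mul_sq_of_dvd (n : ℕ) (hn : 0 < n) (c : ℤ)
    (hc : (n : ℤ) ∣ c ^ 2 + 2) : ∃ x y : ℤ, x ^ 2 + 2 * y ^ 2 = n ∧ c * y ≡ x [ZMOD n] := by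
  induction n using Nat.strong_induction_on generalizing c with
  | _ n ih =>
  obtain rfl | hn2 : n = 1 ∨ 2 ≤ n := by omega
  · exact ⟨1, 0, by norm_num, Int.modEq_one⟩
  set c' := c.bmod n
  have hc' : c' ≡ c [ZMOD n] := Int.bmod_emod
  obtain ⟨m, hm⟩ := ((hc'.pow 2).add_right 2).dvd_iff.2 hc
  have hc'n := Int.four_mul_sq_bmod_le c hn
  have hn2' : (2 : ℤ) ≤ n := by exact_mod_cast hn2
  have hm0 : 0 < m := by nlinarith [sq_nonneg c']
  have hmn : m < n := by nlinarith
  lift m to ℕ using hm0.le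
  obtain ⟨s, t, hst, hts⟩ := ih m (by exact_mod_cast hmn) (by exact_mod_cast hm0) c'
    ⟨n, by rw [hm]; ring⟩
  obtain ⟨a, b, hab, hba⟩ := Int.exists_sq_add_two_mul_sq_of_mul_eq (n := n) (by positivity)
    (by rw [hm]; ring) hst hts
  exact ⟨a, b, hab, (hc'.symm.mul_right b).trans hba⟩

theorem Int.isCoprime_of_sq_add_two_mul_sq {n c x y : ℤ} (hn : n ≠ 0) (hc : n ∣ c ^ 2 + 2)
    (hxy : x ^ 2 + 2 * y ^ 2 = n) (hyx : c * y ≡ x [ZMOD n]) : IsCoprime x y := by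
  obtain ⟨k, hk⟩ := hyx.dvd
  obtain ⟨j, hj⟩ := hc
  refine ⟨k, c * k + j * y, mul_left_cancel₀ hn ?_⟩
  linear_combination -(x + c * y) * hk - y ^ 2 * hj + hxy

theorem stmt_3 (n : ℕ) (hn : 5 ≤ n) :
    ∀ z : ZMod n, z ^ 2 + 2 = 0 →
      ∃ x y : ℤ, 0 < x ∧ y ≠ 0 ∧ Int.gcd x y = 1 ∧
        x ^ 2 + 2 * y ^ 2 = (n : ℤ) ∧ z * (y : ZMod n) = (x : ZMod n) := by
  intro z hz
  obtain ⟨c, rfl⟩ := ZMod.intCast_surjective z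
  have hc : (n : ℤ) ∣ c ^ 2 + 2 :=
    (ZMod.intCast_zmod_eq_zero_iff_dvd _ _).1 (by push_cast; exact hz)
  obtain ⟨x, y, hxy, hyx⟩ := Int.exists_sq_add_two_mul_sq_of_dvd n (by omega) c hc
  have hcop := Int.isCoprime_of_sq_add_two_mul_sq (by omega) hc hxy hyx
  have hzy : (c : ZMod n) * y = x := by exact_mod_cast (ZMod.intCast_eq_intCast_iff _ _ _).2 hyx
  have hy : y ≠ 0 := by
    rintro rfl
    have := Int.isUnit_sq (isCoprime_zero_right.1 hcop)
    omega
  have hx : x ≠ 0 := by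
    rintro rfl
    have := Int.isUnit_sq (isCoprime_zero_left.1 hcop)
    omega
  rcases hx.lt_or_gt with hneg | hpos
  · refine ⟨-x, -y, neg_pos.2 hneg, neg_ne_zero.2 hy, ?_, by linear_combination hxy, ?_⟩
    · exact Int.isCoprime_iff_gcd_eq_one.1 hcop.neg_neg
    · push_cast
      rw [mul_neg, hzy]
  · exact ⟨x, y, hpos, hy, Int.isCoprime_iff_gcd_eq_one.1 hcop, hxy, hzy⟩
end

section
/- Let n ≥ 5 and let z be an integer with z² + 2 ≡ 0 (mod n). Let a, q be integers with 1 ≤ q ≤ √n, gcd(a,q)=1, and |z/n - a/q| < 1/(q√n). Set r = zq - an. Then n divides r² + 2q², |r| < √n, and 0 < r² + 2q² < 3n; consequently r² + 2q² = n or r² + 2q² = 2n. -/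
/-!
Multiplying `z² ≡ -2 (mod n)` by `q²` gives `r² + 2q² ≡ 0 (mod n)`, while the approximation
`z/n - a/q = r/(nq)` forces `|r| < √n`. Together with `q ≤ √n` this squeezes the positive multiple
`r² + 2q²` of `n` strictly below `3n`.
-/

theorem dvd_sub_mul_sq_add_mul_sq {R : Type*} [CommRing R] {n z c : R} (h : n ∣ z ^ 2 + c)
    (a q : R) : n ∣ (z * q - a * n) ^ 2 + c * q ^ 2 := by
  obtain ⟨k, hk⟩ := h
  exact ⟨q ^ 2 * k + a ^ 2 * n - 2 * z * q * a, by linear_combination q ^ 2 * hk⟩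

theorem abs_mul_sub_mul_lt_sqrt_of_abs_div_sub_div_lt {n q z a : ℝ} (hn : 0 < n) (hq : 0 < q)
    (h : |z / n - a / q| < 1 / (q * √n)) : |z * q - a * n| < √n := by
  have hsqrt : 0 < √n := Real.sqrt_pos.2 hn
  have hdiff : z / n - a / q = (z * q - a * n) / (n * q) := by field_simp
  rw [hdiff, abs_div, abs_of_pos (mul_pos hn hq), div_lt_iff₀ (mul_pos hn hq)] at h
  calc |z * q - a * n| < 1 / (q * √n) * (n * q) := h
    _ = n / √n := by field_simp
    _ = √n := Real.div_sqrt

theorem Int.eq_or_eq_two_mul_of_dvd_of_pos_of_lt_three_mul {n m : ℤ} (hdvd : n ∣ m) (hpos : 0 < m)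
    (hlt : m < 3 * n) : m = n ∨ m = 2 * n := by
  obtain ⟨k, rfl⟩ := hdvd
  have hn : 0 < n := by nlinarith
  have hk1 : 0 < k := pos_of_mul_pos_right hpos hn.le
  have hk3 : k < 3 := lt_of_mul_lt_mul_left (by linarith) hn.le
  interval_cases k <;> simp [mul_comm]

theorem stmt_8_general (n : ℕ) (z a q : ℤ)
    (hz : (n : ℤ) ∣ z ^ 2 + 2)
    (hq1 : 1 ≤ q) (hq2 : (q : ℝ) ≤ Real.sqrt n)
    (happrox : |(z : ℝ) / n - (a : ℝ) / q| < 1 / (q * Real.sqrt n))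
    (r : ℤ) (hr : r = z * q - a * n) :
    (n : ℤ) ∣ r ^ 2 + 2 * q ^ 2 ∧
    (|r| : ℝ) < Real.sqrt n ∧
    0 < r ^ 2 + 2 * q ^ 2 ∧ r ^ 2 + 2 * q ^ 2 < 3 * n ∧
    (r ^ 2 + 2 * q ^ 2 = (n : ℤ) ∨ r ^ 2 + 2 * q ^ 2 = 2 * n) := by
  have hqR : (0 : ℝ) < q := by exact_mod_cast hq1
  have hnR : (0 : ℝ) < n := Real.sqrt_pos.1 (hqR.trans_le hq2)
  have hdvd : (n : ℤ) ∣ r ^ 2 + 2 * q ^ 2 := hr ▸ dvd_sub_mul_sq_add_mul_sq hz a q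
  have hr_lt : (|r| : ℝ) < √n := by
    simpa [hr] using abs_mul_sub_mul_lt_sqrt_of_abs_div_sub_div_lt hnR hqR happrox
  have hr_sq : r ^ 2 < (n : ℤ) := by
    have := (Real.lt_sqrt (abs_nonneg _)).1 hr_lt
    rw [sq_abs] at this
    exact_mod_cast this
  have hq_sq : q ^ 2 ≤ (n : ℤ) := by
    have := (Real.le_sqrt hqR.le hnR.le).1 hq2
    exact_mod_cast this
  have hpos : 0 < r ^ 2 + 2 * q ^ 2 := by positivity
  have hlt : r ^ 2 + 2 * q ^ 2 < 3 * n := by linarith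
  exact ⟨hdvd, hr_lt, hpos, hlt,
    Int.eq_or_eq_two_mul_of_dvd_of_pos_of_lt_three_mul hdvd hpos hlt⟩

theorem stmt_8 (n : ℕ) (hn : 5 ≤ n) (z a q : ℤ)
    (hz : (n : ℤ) ∣ z ^ 2 + 2)
    (hq1 : 1 ≤ q) (hq2 : (q : ℝ) ≤ Real.sqrt n)
    (hcop : Int.gcd a q = 1)
    (happrox : |(z : ℝ) / n - (a : ℝ) / q| < 1 / (q * Real.sqrt n))
    (r : ℤ) (hr : r = z * q - a * n) :
    (n : ℤ) ∣ r ^ 2 + 2 * q ^ 2 ∧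
    (|r| : ℝ) < Real.sqrt n ∧
    0 < r ^ 2 + 2 * q ^ 2 ∧ r ^ 2 + 2 * q ^ 2 < 3 * n ∧
    (r ^ 2 + 2 * q ^ 2 = (n : ℤ) ∨ r ^ 2 + 2 * q ^ 2 = 2 * n) :=
  stmt_8_general n z a q hz hq1 hq2 happrox r hr
end

section
/- Let n, z, q, a, r be integers with n ∣ z² + 2, r = zq − an, and r² + 2q² = n. Then r·a + 1 = k·q where k = ((z²+2)/n)·q − a·z is an integer; in particular gcd(r, q) = 1. -/
/-!
Write `z² + 2 = n m`. Expanding `r = z q - a n` gives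
`r² + 2 q² = n (m q² - 2 a z q + a² n)`, so `r² + 2 q² = n` forces the binary quadratic form
`m q² - 2 a z q + a² n` (of discriminant `-8`) to take the value `1` at `(q, a)`.
Substituting this `1` into `r a + 1` yields `(m q - a z) q`, a Bézout relation for `r` and `q`.
-/

section

variable {R : Type*} [CommRing R]

theorem sq_sub_add_two_mul_sq_eq_mul {n z a q m : R} (hm : z ^ 2 + 2 = n * m) :
    (z * q - a * n) ^ 2 + 2 * q ^ 2 = n * (m * q ^ 2 - 2 * a * z * q + a ^ 2 * n) := by
  linear_combination q ^ 2 * hm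

theorem form_eq_one_of_sq_sub_add_two_mul_sq_eq [IsDomain R] {n z a q m : R} (hn : n ≠ 0)
    (hm : z ^ 2 + 2 = n * m) (heq : (z * q - a * n) ^ 2 + 2 * q ^ 2 = n) :
    m * q ^ 2 - 2 * a * z * q + a ^ 2 * n = 1 :=
  mul_left_cancel₀ hn <| by rw [← sq_sub_add_two_mul_sq_eq_mul hm, heq, mul_one]

theorem sub_mul_mul_add_one_eq [IsDomain R] {n z a q m : R} (hn : n ≠ 0)
    (hm : z ^ 2 + 2 = n * m) (heq : (z * q - a * n) ^ 2 + 2 * q ^ 2 = n) :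
    (z * q - a * n) * a + 1 = (m * q - a * z) * q := by
  linear_combination -form_eq_one_of_sq_sub_add_two_mul_sq_eq hn hm heq

end

theorem isCoprime_of_mul_add_one_eq_mul {R : Type*} [CommRing R] {r a k q : R}
    (h : r * a + 1 = k * q) : IsCoprime r q :=
  ⟨-a, k, by linear_combination -h⟩

theorem stmt_9_general (n z a q r : ℤ) (hdvd : n ∣ z ^ 2 + 2)
    (hr : r = z * q - a * n) (heq : r ^ 2 + 2 * q ^ 2 = n) :
    r * a + 1 = ((z ^ 2 + 2) / n * q - a * z) * q ∧ Int.gcd r q = 1 := by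
  obtain ⟨m, hm⟩ := hdvd
  have hn : n ≠ 0 := by
    rintro rfl
    nlinarith [sq_nonneg z]
  have hquot : (z ^ 2 + 2) / n = m := by rw [hm, Int.mul_ediv_cancel_left _ hn]
  subst hr
  have hbezout := sub_mul_mul_add_one_eq hn hm heq
  rw [hquot]
  exact ⟨hbezout, Int.isCoprime_iff_gcd_eq_one.mp (isCoprime_of_mul_add_one_eq_mul hbezout)⟩

theorem stmt_9 (n z a q r : ℤ) (hn : 1 ≤ n) (hdvd : n ∣ z ^ 2 + 2)
    (hr : r = z * q - a * n) (heq : r ^ 2 + 2 * q ^ 2 = n) :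
    r * a + 1 = ((z ^ 2 + 2) / n * q - a * z) * q ∧ Int.gcd r q = 1 :=
  stmt_9_general n z a q r hdvd hr heq
end

section
/- Let n, z, q, a, r be integers with n ∣ z² + 2, r = zq − an, and r² + 2q² = 2n. Then r·a + 2 = k·q where k = ((z²+2)/n)·q − a·z ∈ ℤ; consequently gcd(r, q) ≤ 2. -/
/-! Multiplying `r * a + 2 = k * q` by `n` turns it into a polynomial identity that follows from
`r = z * q - a * n`, `r ^ 2 + 2 * q ^ 2 = 2 * n` and `n * ((z ^ 2 + 2) / n) = z ^ 2 + 2`;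
`n ≠ 0` because it divides `z ^ 2 + 2 > 0`. The identity exhibits `2` as a combination
`k * q - a * r`, so `gcd r q` divides `2`. -/

theorem Int.gcd_le_natAbs_of_mul_add_eq_mul {r q a k c : ℤ} (h : r * a + c = k * q) (hc : c ≠ 0) :
    Int.gcd r q ≤ c.natAbs := by
  have hdvd : (Int.gcd r q : ℤ) ∣ c := by
    rw [show c = k * q - r * a by linarith]
    exact dvd_sub ((Int.gcd_dvd_right r q).mul_left k) ((Int.gcd_dvd_left r q).mul_right a)
  exact Nat.le_of_dvd (Int.natAbs_pos.mpr hc) (Int.ofNat_dvd_left.mp hdvd)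

theorem mul_add_two_eq_of_sq_add_two_sq_eq {n z a q r : ℤ} (hdvd : n ∣ z ^ 2 + 2)
    (hr : r = z * q - a * n) (heq : r ^ 2 + 2 * q ^ 2 = 2 * n) :
    r * a + 2 = ((z ^ 2 + 2) / n * q - a * z) * q := by
  obtain ⟨m, hm⟩ := hdvd
  have hn : n ≠ 0 := by
    rintro rfl
    nlinarith [sq_nonneg z]
  rw [hm, Int.mul_ediv_cancel_left m hn]
  refine mul_left_cancel₀ hn ?_
  subst hr
  linear_combination -heq + q ^ 2 * hm

theorem stmt_10_general (n z a q r : ℤ) (hdvd : n ∣ z ^ 2 + 2)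
    (hr : r = z * q - a * n) (heq : r ^ 2 + 2 * q ^ 2 = 2 * n) :
    r * a + 2 = ((z ^ 2 + 2) / n * q - a * z) * q ∧ Int.gcd r q ≤ 2 := by
  have hk := mul_add_two_eq_of_sq_add_two_sq_eq hdvd hr heq
  exact ⟨hk, Int.gcd_le_natAbs_of_mul_add_eq_mul hk two_ne_zero⟩

theorem stmt_10 (n z a q r : ℤ) (hn : 1 ≤ n) (hdvd : n ∣ z ^ 2 + 2)
    (hr : r = z * q - a * n) (heq : r ^ 2 + 2 * q ^ 2 = 2 * n) :
    r * a + 2 = ((z ^ 2 + 2) / n * q - a * z) * q ∧ Int.gcd r q ≤ 2 :=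
  stmt_10_general n z a q r hdvd hr heq
end
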